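/- Suppose M ≥ k·max_{i,j} Δ(i,j). Then there exists a feasible assignment f maximizing the total score Σ_{j=1}^{n_B} s(f(j), j) that uses every dummy row, i.e., a maximizer assigning exactly k records of B to rows i ≤ n_A. -/

import Mathlib

/-- Entry of the augmented score matrix: `Δ(i,j)` for the genuine rows `i < nA` and the
large value `M` for the `nB − k` dummy rows `nA ≤ i < nA + nB − k`. -/
noncomputable def augScore {nA nB k : ℕ} (Δ : Fin nA → Fin nB → ℝ) (M : ℝ)
    (i : Fin (nA + nB - k)) (j : Fin nB) : ℝ :=
  if h : (i : ℕ) < nA then Δ ⟨(i : ℕ), h⟩ j else M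

/-!
Call the rows of `D` dummy rows; every dummy row scores at least as much as every other row.
If an injective assignment misses a dummy row `i`, then by pigeonhole some column `j` sits on a
non-dummy row, and moving `j` to `i` keeps the assignment injective, does not decrease the
score and puts one more column on a dummy row. So a maximizer of the total score that puts as
many columns as possible on dummy rows uses every dummy row.
-/

open Finset Function

section Assignment

variable {α β R : Type*}

def totalScore [Fintype β] [AddCommMonoid R] (s : α → β → R) (f : β → α) : R :=
  ∑ j, s (f j) j

theorem swap_comp_eq_update [DecidableEq α] [DecidableEq β] {f : β → α} (hf : Injective f)
    {i : α} (hi : ∀ j, f j ≠ i) (j : β) : ⇑(Equiv.swap (f j) i) ∘ f = update f j i := by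
  funext x
  rcases eq_or_ne x j with rfl | hx
  · simp
  · simp [update_of_ne hx, Equiv.swap_apply_of_ne_of_ne (hf.ne hx) (hi x)]

theorem Function.Injective.update_of_forall_ne [DecidableEq α] [DecidableEq β] {f : β → α}
    (hf : Injective f) {i : α} (hi : ∀ j, f j ≠ i) (j : β) : Injective (update f j i) :=
  swap_comp_eq_update hf hi j ▸ (Equiv.injective _).comp hf

theorem totalScore_le_totalScore_update [Fintype β] [DecidableEq β] [AddCommMonoid R]
    [PartialOrder R] [IsOrderedAddMonoid R] (s : α → β → R) (f : β → α) {i : α} {j : β}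
    (hij : s (f j) j ≤ s i j) : totalScore s f ≤ totalScore s (update f j i) := by
  refine sum_le_sum fun x _ => ?_
  rcases eq_or_ne x j with rfl | hx
  · simpa using hij
  · simp [update_of_ne hx]

theorem card_filter_mem_lt_card_filter_update_mem [Fintype β] [DecidableEq α] [DecidableEq β]
    (f : β → α) {D : Finset α} {i : α} (hi : i ∈ D) {j : β} (hj : f j ∉ D) :
    #{x | f x ∈ D} < #{x | update f j i x ∈ D} := by
  have hsub : ({x | f x ∈ D} : Finset β) ⊆ ({x | update f j i x ∈ D} : Finset β) := by
    intro x hx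
    rcases eq_or_ne x j with rfl | hne
    · simp_all
    · simpa [update_of_ne hne] using hx
  exact card_lt_card ((ssubset_iff_of_subset hsub).2 ⟨j, by simp [hi], by simp [hj]⟩)

theorem exists_apply_notMem_of_card_le [Fintype β] [DecidableEq α] {f : β → α}
    (hf : Injective f) {D : Finset α} (hD : #D ≤ Fintype.card β) {i : α} (hi : i ∈ D)
    (hni : ∀ j, f j ≠ i) : ∃ j, f j ∉ D := by
  by_contra! h
  have hle := card_le_card_of_injOn f (s := univ) (t := D.erase i)
    (fun j _ => mem_erase.2 ⟨hni j, h j⟩) hf.injOn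
  rw [card_univ, card_erase_of_mem hi] at hle
  have := card_pos.2 ⟨i, hi⟩
  omega

theorem card_filter_apply_mem_of_injective [Fintype β] [DecidableEq α] {f : β → α}
    (hf : Injective f) {D : Finset α} (hD : ↑D ⊆ Set.range f) :
    #{j | f j ∈ D} = #D := by
  rw [← card_image_of_injective _ hf]
  congr 1
  ext i
  simp only [mem_image, mem_filter, mem_univ, true_and]
  refine ⟨fun ⟨j, hj, hji⟩ => hji ▸ hj, fun hi => ?_⟩
  obtain ⟨j, rfl⟩ := hD hi
  exact ⟨j, hi, rfl⟩

variable [Fintype α] [Fintype β] [AddCommMonoid R] (s : α → β → R) {D : Finset α}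

theorem exists_injective_le_totalScore_and_subset_range [PartialOrder R] [IsOrderedAddMonoid R]
    (hs : ∀ i ∈ D, ∀ i' ∉ D, ∀ j, s i' j ≤ s i j) (hD : #D ≤ Fintype.card β)
    {g : β → α} (hg : Injective g) :
    ∃ f : β → α, Injective f ∧ ↑D ⊆ Set.range f ∧ totalScore s g ≤ totalScore s f := by
  classical
  obtain ⟨f, hf, hfmax⟩ :=
    ({f | Injective f ∧ totalScore s g ≤ totalScore s f} : Finset (β → α)).exists_max_image
      (fun f => #{x | f x ∈ D}) ⟨g, by simp [hg]⟩
  simp only [mem_filter, mem_univ, true_and] at hf hfmax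
  obtain ⟨hf_inj, hgf⟩ := hf
  refine ⟨f, hf_inj, fun i hi => ?_, hgf⟩
  by_contra hni
  simp only [Set.mem_range, not_exists] at hni
  obtain ⟨j, hj⟩ := exists_apply_notMem_of_card_le hf_inj hD hi hni
  have hmoved := hfmax (update f j i) ⟨hf_inj.update_of_forall_ne hni j,
    hgf.trans (totalScore_le_totalScore_update s f (hs i hi _ hj j))⟩
  exact (card_filter_mem_lt_card_filter_update_mem f hi hj).not_ge hmoved

theorem exists_totalScore_maximizer_subset_range [LinearOrder R] [IsOrderedAddMonoid R]
    (hs : ∀ i ∈ D, ∀ i' ∉ D, ∀ j, s i' j ≤ s i j) (hD : #D ≤ Fintype.card β)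
    {g₀ : β → α} (hg₀ : Injective g₀) :
    ∃ f : β → α, Injective f ∧ (∀ g : β → α, Injective g → totalScore s g ≤ totalScore s f) ∧
      ↑D ⊆ Set.range f := by
  classical
  obtain ⟨f₀, hf₀, hf₀max⟩ := ({f | Injective f} : Finset (β → α)).exists_max_image
    (totalScore s) ⟨g₀, by simpa using hg₀⟩
  simp only [mem_filter, mem_univ, true_and] at hf₀ hf₀max
  obtain ⟨f, hf, hfD, hf₀f⟩ := exists_injective_le_totalScore_and_subset_range s hs hD hf₀
  exact ⟨f, hf, fun g hg => (hf₀max g hg).trans hf₀f, hfD⟩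

end Assignment

theorem Fin.card_filter_le_val {N m : ℕ} : #{i : Fin N | m ≤ (i : ℕ)} = N - m := by
  have := card_filter_add_card_filter_not (s := (univ : Finset (Fin N))) (fun i => (i : ℕ) < m)
  simp only [not_lt, Fin.card_filter_val_lt, card_univ, Fintype.card_fin] at this
  omega

/-- If `M ≥ k·max_{i,j} Δ(i,j)` (here stated as `M ≥ k·Δ(i,j)` for all
`i, j`, equivalent since `1 ≤ k ≤ min(nA, nB)` makes the index set nonempty), then there
exists an injective assignment `f : Fin nB → Fin (nA + nB − k)` maximizing the total
augmented score that uses every dummy row, i.e., a maximizer assigning exactly `k`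
records of `B` to the genuine rows `i < nA`. -/
theorem lsap_exists_maximizer_using_all_dummy_rows
    {nA nB k : ℕ} (hk1 : 1 ≤ k) (hkA : k ≤ nA) (hkB : k ≤ nB)
    (Δ : Fin nA → Fin nB → ℝ) (hΔ : ∀ i j, 0 ≤ Δ i j)
    (M : ℝ) (hM : ∀ i j, (k : ℝ) * Δ i j ≤ M) :
    ∃ f : Fin nB → Fin (nA + nB - k), Function.Injective f ∧
      (∀ g : Fin nB → Fin (nA + nB - k), Function.Injective g →
        ∑ j, augScore Δ M (g j) j ≤ ∑ j, augScore Δ M (f j) j) ∧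
      (∀ i : Fin (nA + nB - k), nA ≤ (i : ℕ) → ∃ j, f j = i) ∧
      (Finset.univ.filter (fun j : Fin nB => ((f j : ℕ)) < nA)).card = k := by
  set D : Finset (Fin (nA + nB - k)) := {i | nA ≤ (i : ℕ)}
  have hΔM : ∀ i j, Δ i j ≤ M := fun i j =>
    (le_mul_of_one_le_left (hΔ i j) (by exact_mod_cast hk1)).trans (hM i j)
  have hs : ∀ i ∈ D, ∀ i' ∉ D, ∀ j, augScore Δ M i' j ≤ augScore Δ M i j := by
    intro i hi i' hi' j
    simp only [D, mem_filter, mem_univ, true_and, not_le] at hi hi'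
    simpa [augScore, hi', hi.not_gt] using hΔM _ j
  have hcardD : #D = nB - k := by rw [Fin.card_filter_le_val]; omega
  obtain ⟨f, hf, hfmax, hfD⟩ := exists_totalScore_maximizer_subset_range (augScore Δ M) hs
    (by simp [hcardD]) (Fin.castLE_injective (by omega : nB ≤ nA + nB - k))
  refine ⟨f, hf, hfmax, fun i hi => hfD (by simpa [D] using hi), ?_⟩
  have hcount := card_filter_add_card_filter_not (s := (univ : Finset (Fin nB)))
    (fun j => (f j : ℕ) < nA)
  have hdummy := card_filter_apply_mem_of_injective hf hfD
  rw [hcardD] at hdummy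
  simp only [D, mem_filter, mem_univ, true_and, not_lt, card_univ, Fintype.card_fin]
    at hcount hdummy
  omega
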